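/- For every h ∈ E, setting g(t) := h(t) cos t − h'(t) sin t, the function t ↦ g(t)² cos t / sin² t is Lebesgue integrable on (0, π/2) and ∫₀^{π/2} (h(t)² − (1/2) h'(t)²) cos t dt = −(1/2) ∫₀^{π/2} g(t)² cos t / sin² t dt. -/

import Mathlib

open Real MeasureTheory Set

/-- `h` belongs to the class `E` of functions of class `C^{1,1}` on `[0, π/2]`
(continuously differentiable with Lipschitz continuous derivative) satisfying
`h 0 = 0` and `h' (π/2) = 0`; the function `h'` is the derivative of `h` on `[0, π/2]`. -/
structure MemE (h h' : ℝ → ℝ) : Prop where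
  hasDeriv : ∀ t ∈ Icc (0:ℝ) (π/2), HasDerivWithinAt h (h' t) (Icc (0:ℝ) (π/2)) t
  lipschitz : ∃ K : NNReal, LipschitzOnWith K h' (Icc (0:ℝ) (π/2))
  h_zero : h 0 = 0
  h'_pi_div_two : h' (π/2) = 0

/-!
On `(0, π/2)` one has the pointwise identity
`g² cos t / sin² t = -2 (h² - h'²/2) cos t + Q'(t)` with `Q t = -h(t)² cos² t / sin t`,
so the nonnegative integrand is a continuous function plus a derivative. Since `h 0 = 0` and `h`
is differentiable at `0`, `h(t)²/sin t → 0`, so `Q` extends continuously by `0` to `[0, π/2]`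
(and `Q (π/2) = 0` because of `cos`). A nonnegative derivative of a function continuous on a
closed interval is integrable, and the fundamental theorem of calculus gives the value.
-/

open Filter Topology

theorem tendsto_sq_div_nhdsGT {f g : ℝ → ℝ} {a f' g' : ℝ}
    (hf : HasDerivWithinAt f f' (Ioi a) a) (hg : HasDerivWithinAt g g' (Ioi a) a)
    (hf0 : f a = 0) (hg0 : g a = 0) (hg' : g' ≠ 0) :
    Tendsto (fun t => f t ^ 2 / g t) (𝓝[>] a) (𝓝 0) := by
  have hslope := ((((hasDerivWithinAt_iff_tendsto_slope' self_notMem_Ioi).1 hf).pow 2).div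
    ((hasDerivWithinAt_iff_tendsto_slope' self_notMem_Ioi).1 hg) hg').mul
    (tendsto_nhdsWithin_of_tendsto_nhds ((continuous_sub_right a).tendsto' a 0 (sub_self a)))
  rw [mul_zero] at hslope
  refine hslope.congr' (eventually_nhdsWithin_of_forall fun t ht => ?_)
  have ht : t - a ≠ 0 := sub_ne_zero.2 (ne_of_gt ht)
  simp only [Pi.div_apply, slope_def_field, hf0, hg0, sub_zero]
  field_simp

theorem continuousOn_sq_mul_cos_sq_div_sin {h : ℝ → ℝ} {b d : ℝ} (hb : b < π)
    (hcont : ContinuousOn h (Icc 0 b)) (h0 : h 0 = 0) (hd : HasDerivWithinAt h d (Ioi 0) 0) :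
    ContinuousOn (fun t => h t ^ 2 * cos t ^ 2 / sin t) (Icc 0 b) := by
  intro t ht
  rcases ht.1.eq_or_lt with rfl | htpos
  · have hlim : Tendsto (fun t => h t ^ 2 / sin t * cos t ^ 2) (𝓝[>] 0) (𝓝 0) := by
      simpa using (tendsto_sq_div_nhdsGT hd (hasDerivAt_sin 0).hasDerivWithinAt h0 sin_zero
        (by simp)).mul (continuous_cos.pow 2).continuousWithinAt
    refine (continuousWithinAt_Ioi_iff_Ici.1 ?_).mono Icc_subset_Ici_self
    simpa [ContinuousWithinAt, h0, div_mul_eq_mul_div] using hlim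
  · exact (((hcont t ht).pow 2).mul (continuous_cos.pow 2).continuousWithinAt).div
      continuous_sin.continuousWithinAt (sin_pos_of_pos_of_lt_pi htpos (ht.2.trans_lt hb)).ne'

theorem hasDerivAt_sq_mul_cos_sq_div_sin {h : ℝ → ℝ} {d x : ℝ} (hd : HasDerivAt h d x)
    (hx : sin x ≠ 0) :
    HasDerivAt (fun t => h t ^ 2 * cos t ^ 2 / sin t)
      (2 * h x * d * cos x ^ 2 / sin x - 2 * h x ^ 2 * cos x - h x ^ 2 * cos x ^ 3 / sin x ^ 2)
      x := by
  refine (((hd.fun_pow 2).fun_mul ((hasDerivAt_cos x).fun_pow 2)).fun_div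
    (hasDerivAt_sin x) hx).congr_deriv ?_
  field_simp
  ring

theorem integrableOn_Ioo_and_setIntegral_eq_of_nonneg_of_eq_add_deriv {a b : ℝ} (hab : a ≤ b)
    {P F F' G : ℝ → ℝ} (hP : ContinuousOn P (Icc a b)) (hF : ContinuousOn F (Icc a b))
    (hF' : ∀ x ∈ Ioo a b, HasDerivAt F (F' x) x) (hG : ∀ x ∈ Ioo a b, G x = P x + F' x)
    (hG0 : ∀ x ∈ Ioo a b, 0 ≤ G x) :
    IntegrableOn G (Ioo a b) ∧ ∫ x in Ioo a b, G x = (∫ x in a..b, P x) + F b - F a := by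
  set Φ : ℝ → ℝ := fun x => (∫ y in a..x, P y) + F x
  have hPint : IntervalIntegrable P volume a b := hP.intervalIntegrable_of_Icc hab
  have hΦcont : ContinuousOn Φ (Icc a b) := by
    rw [← uIcc_of_le hab] at hF ⊢
    exact (intervalIntegral.continuousOn_primitive_interval' hPint left_mem_uIcc).add hF
  have hΦ' : ∀ x ∈ Ioo a b, HasDerivAt Φ (G x) x := fun x hx => by
    rw [hG x hx]
    refine (intervalIntegral.integral_hasDerivAt_right ?_ ?_ ?_).add (hF' x hx)
    · exact hPint.mono_set (uIcc_subset_uIcc_left (Icc_subset_uIcc (Ioo_subset_Icc_self hx)))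
    · exact (hP.mono Ioo_subset_Icc_self).stronglyMeasurableAtFilter isOpen_Ioo x hx
    · exact hP.continuousAt (Icc_mem_nhds hx.1 hx.2)
  have hGint : IntegrableOn G (Ioc a b) :=
    intervalIntegral.integrableOn_deriv_of_nonneg hΦcont hΦ' hG0
  refine ⟨hGint.mono_set Ioo_subset_Ioc_self, ?_⟩
  rw [← integral_Ioc_eq_integral_Ioo, ← intervalIntegral.integral_of_le hab,
    intervalIntegral.integral_eq_sub_of_hasDerivAt_of_le hab hΦcont hΦ'
      ((intervalIntegrable_iff_integrableOn_Ioc_of_le hab).2 hGint)]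
  simp only [Φ, intervalIntegral.integral_same, zero_add]

theorem F_eq_neg_half_integral (h h' : ℝ → ℝ) (hE : MemE h h') :
    IntegrableOn
      (fun t => (h t * Real.cos t - h' t * Real.sin t) ^ 2 * Real.cos t / Real.sin t ^ 2)
      (Ioo (0:ℝ) (π/2)) volume ∧
    ∫ t in (0:ℝ)..(π/2), (h t ^ 2 - (1/2) * h' t ^ 2) * Real.cos t
      = -(1/2) * ∫ t in Ioo (0:ℝ) (π/2),
          (h t * Real.cos t - h' t * Real.sin t) ^ 2 * Real.cos t / Real.sin t ^ 2 := by
  have hπ : (0:ℝ) < π / 2 := by positivity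
  obtain ⟨K, hK⟩ := hE.lipschitz
  have hcont : ContinuousOn h (Icc 0 (π / 2)) := fun t ht =>
    (hE.hasDeriv t ht).continuousWithinAt
  have hderiv : ∀ x ∈ Ioo 0 (π / 2), HasDerivAt h (h' x) x := fun x hx =>
    (hE.hasDeriv x (Ioo_subset_Icc_self hx)).hasDerivAt (Icc_mem_nhds hx.1 hx.2)
  have hsin : ∀ x ∈ Ioo 0 (π / 2), sin x ≠ 0 := fun x hx =>
    (sin_pos_of_pos_of_lt_pi hx.1 (by linarith [hx.2, pi_pos])).ne'
  obtain ⟨hint, hval⟩ := integrableOn_Ioo_and_setIntegral_eq_of_nonneg_of_eq_add_deriv hπ.le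
    (P := fun t => -2 * ((h t ^ 2 - (1 / 2) * h' t ^ 2) * cos t))
    (F := fun t => -(h t ^ 2 * cos t ^ 2 / sin t))
    (G := fun t => (h t * cos t - h' t * sin t) ^ 2 * cos t / sin t ^ 2)
    (continuousOn_const.mul (((hcont.pow 2).sub (continuousOn_const.mul
      (hK.continuousOn.pow 2))).mul continuous_cos.continuousOn))
    (continuousOn_sq_mul_cos_sq_div_sin (by linarith [pi_pos]) hcont hE.h_zero
      ((hE.hasDeriv 0 ⟨le_rfl, hπ.le⟩).mono_of_mem_nhdsWithin (Icc_mem_nhdsGT hπ))).neg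
    (fun x hx => (hasDerivAt_sq_mul_cos_sq_div_sin (hderiv x hx) (hsin x hx)).neg)
    (fun x hx => by field_simp [hsin x hx]; ring)
    (fun x hx => div_nonneg (mul_nonneg (sq_nonneg _)
      (cos_nonneg_of_mem_Icc ⟨by linarith [hx.1, pi_pos], hx.2.le⟩)) (sq_nonneg _))
  refine ⟨hint, ?_⟩
  rw [hval, intervalIntegral.integral_const_mul]
  simp [hE.h_zero]
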